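/- arXiv:2203.01280 — 2 statements merged into one kernel-verified Lean document; each statement's English description precedes it below -/
import Mathlib

section
/- Let n ≥ 1 and define the (n+1)×(n+1) integer matrix M by M_{k,i} = coefficient of y^i in (1-y)^k (1+y)^(n-k), for 0 ≤ i, k ≤ n. Then M^2 = 2^n * I, where I is the identity matrix. -/
open Polynomial Finset

lemma deg_le (n k : ℕ) (hk : k ≤ n) :
    ((1 - X : ℤ[X]) ^ k * (1 + X) ^ (n - k)).natDegree < n + 1 := by
  have h1 : ((1 - X : ℤ[X]) ^ k).natDegree ≤ k := by
    apply natDegree_pow_le.trans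
    have : (1 - X : ℤ[X]).natDegree ≤ 1 := by compute_degree
    nlinarith
  have h2 : ((1 + X : ℤ[X]) ^ (n - k)).natDegree ≤ n - k := by
    apply natDegree_pow_le.trans
    have : (1 + X : ℤ[X]).natDegree ≤ 1 := by compute_degree
    nlinarith
  have := natDegree_mul_le (p := (1 - X : ℤ[X]) ^ k) (q := (1 + X) ^ (n - k))
  omega

lemma key (n k : ℕ) (hk : k ≤ n) :
    ∑ i ∈ Finset.range (n + 1),
      C (((1 - X : ℤ[X]) ^ k * (1 + X) ^ (n - k)).coeff i) *
        ((1 - X : ℤ[X]) ^ i * (1 + X) ^ (n - i))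
    = C ((2 : ℤ) ^ n) * X ^ k := by
  set p : ℤ[X] := (1 - X) ^ k * (1 + X) ^ (n - k) with hp
  have hdeg := deg_le n k hk
  have hinj : Function.Injective (algebraMap ℤ[X] (FractionRing ℤ[X])) :=
    IsFractionRing.injective _ _
  apply hinj
  set φ := algebraMap ℤ[X] (FractionRing ℤ[X])
  set a := φ (1 - X) with ha
  set b := φ (1 + X) with hbdef
  set x := φ X with hx
  have hb : b ≠ 0 := by
    rw [hbdef, map_ne_zero_iff φ hinj]
    intro h
    have := congrArg (fun q => Polynomial.coeff q 0) h
    simp at this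
  have h2' : φ 2 = 2 := by
    rw [show (2 : ℤ[X]) = 1 + 1 by norm_num, map_add, map_one]; norm_num
  have hsum : φ (∑ i ∈ Finset.range (n + 1),
      C (p.coeff i) * ((1 - X : ℤ[X]) ^ i * (1 + X) ^ (n - i)))
      = ∑ i ∈ Finset.range (n + 1), φ (C (p.coeff i)) * a ^ i * b ^ (n - i) := by
    rw [map_sum]
    refine Finset.sum_congr rfl fun i hi => ?_
    simp [ha, hbdef, map_mul, map_pow, mul_assoc]
  rw [hsum]
  have hterm : ∀ i ∈ Finset.range (n + 1),
      φ (C (p.coeff i)) * a ^ i * b ^ (n - i)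
      = b ^ n * (φ (C (p.coeff i)) * (a / b) ^ i) := by
    intro i hi
    rw [Finset.mem_range] at hi
    have hbi : b ^ (n - i) = b ^ n / b ^ i := by
      rw [eq_div_iff (pow_ne_zero _ hb), ← pow_add]; congr 1; omega
    rw [hbi, div_pow]; ring
  rw [Finset.sum_congr rfl hterm, ← Finset.mul_sum]
  have heval : ∑ i ∈ Finset.range (n + 1), φ (C (p.coeff i)) * (a / b) ^ i
      = eval₂ (φ.comp Polynomial.C) (a / b) p := by
    rw [eval₂_eq_sum_range' _ hdeg]
    rfl
  rw [heval, hp]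
  rw [eval₂_mul, eval₂_pow, eval₂_pow, eval₂_sub, eval₂_add, eval₂_one, eval₂_X]
  have hba : b - a = 2 * x := by
    rw [hbdef, ha, hx, ← map_sub]
    rw [show (1 + X : ℤ[X]) - (1 - X) = 2 * X by ring, map_mul, h2']
  have hbpa : b + a = 2 := by
    rw [hbdef, ha, ← map_add]
    rw [show (1 + X : ℤ[X]) + (1 - X) = 2 by ring, h2']
  have h1 : (1 : FractionRing ℤ[X]) - a / b = 2 * x / b := by
    rw [← hba, sub_div, div_self hb]
  have h2 : (1 : FractionRing ℤ[X]) + a / b = 2 / b := by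
    rw [← hbpa, add_div, div_self hb]
  rw [h1, h2]
  have hrhs : φ (C ((2 : ℤ) ^ n) * X ^ k) = 2 ^ n * x ^ k := by
    simp only [map_mul, map_pow, hx]
    rw [show (C (2 : ℤ) : ℤ[X]) = 2 by norm_num, h2']
  rw [hrhs]
  have hbn : b ^ n ≠ 0 := pow_ne_zero _ hb
  have hbk : b ^ k * b ^ (n - k) = b ^ n := by rw [← pow_add]; congr 1; omega
  have hfrac : (2 * x / b) ^ k * ((2 : FractionRing ℤ[X]) / b) ^ (n - k)
      = (2 ^ n * x ^ k) / b ^ n := by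
    rw [div_pow, div_pow, div_mul_div_comm, hbk,
      show (2 : FractionRing ℤ[X]) ^ n = 2 ^ k * 2 ^ (n - k) by
        rw [← pow_add]; congr 1; omega]
    ring
  rw [hfrac, mul_comm (b ^ n), div_mul_cancel₀ _ hbn]

theorem stmt1 (n : ℕ) (hn : 1 ≤ n)
    (M : Matrix (Fin (n + 1)) (Fin (n + 1)) ℤ)
    (hM : ∀ k i : Fin (n + 1),
      M k i = Polynomial.coeff ((1 - X : ℤ[X]) ^ (k : ℕ) * (1 + X) ^ (n - (k : ℕ))) (i : ℕ)) :
    M * M = (2 : ℤ) ^ n • (1 : Matrix (Fin (n + 1)) (Fin (n + 1)) ℤ) := by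
  ext k j
  rw [Matrix.mul_apply]
  have hk : (k : ℕ) ≤ n := by omega
  have hkey := key n k hk
  have hcoeff := congrArg (fun q => Polynomial.coeff q (j : ℕ)) hkey
  simp only [finset_sum_coeff, coeff_C_mul] at hcoeff
  have hL : ∑ i : Fin (n + 1), M k i * M i j
      = ∑ i ∈ Finset.range (n + 1),
        (((1 - X : ℤ[X]) ^ (k : ℕ) * (1 + X) ^ (n - (k : ℕ))).coeff i) *
          (((1 - X : ℤ[X]) ^ i * (1 + X) ^ (n - i)).coeff (j : ℕ)) := by
    simp only [hM]
    exact Fin.sum_univ_eq_sum_range (fun i =>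
      (((1 - X : ℤ[X]) ^ (k : ℕ) * (1 + X) ^ (n - (k : ℕ))).coeff i) *
        (((1 - X : ℤ[X]) ^ i * (1 + X) ^ (n - i)).coeff (j : ℕ))) (n + 1)
  rw [hL, hcoeff]
  rw [coeff_X_pow]
  simp [Matrix.one_apply, Fin.ext_iff, eq_comm]
end

section
/- Let n ≥ 1 and for 0 ≤ x, i ≤ n set m_{x,i} = coefficient of y^i in (1-y)^x (1+y)^(n-x). Then for every x with 0 ≤ x ≤ n, the polynomial identity ∑_{i=0}^{n} m_{x,i} * (1-y)^i (1+y)^(n-i) = 2^n * y^x holds in Z[y]. -/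
open Polynomial Finset

theorem stmt2 (n : ℕ) (hn : 1 ≤ n) (x : ℕ) (hx : x ≤ n) :
    ∑ i ∈ Finset.range (n + 1),
      Polynomial.C (Polynomial.coeff ((1 - X : ℤ[X]) ^ x * (1 + X) ^ (n - x)) i) *
        ((1 - X : ℤ[X]) ^ i * (1 + X) ^ (n - i)) =
    (2 : ℤ[X]) ^ n * X ^ x := by
  apply Polynomial.map_injective (Int.castRingHom ℚ) Int.cast_injective
  simp only [Polynomial.map_sum, Polynomial.map_mul, Polynomial.map_pow,
    Polynomial.map_add, Polynomial.map_sub, Polynomial.map_one, Polynomial.map_X,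
    Polynomial.map_C, Polynomial.map_ofNat]
  set Q : ℚ[X] := (1 - X) ^ x * (1 + X) ^ (n - x) with hQ
  have hcoeff : ∀ i, ((Int.castRingHom ℚ) (Polynomial.coeff ((1 - X : ℤ[X]) ^ x * (1 + X) ^ (n - x)) i)) = Q.coeff i := by
    intro i
    rw [hQ, ← Polynomial.coeff_map]
    simp
  have hdeg : Q.natDegree < n + 1 := by
    show ((1 - X : ℚ[X]) ^ x * (1 + X) ^ (n - x)).natDegree < n + 1
    have h1 : ((1 - X : ℚ[X]) ^ x).natDegree ≤ x := by
      apply le_trans (Polynomial.natDegree_pow_le)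
      have : (1 - X : ℚ[X]).natDegree ≤ 1 := by
        apply le_trans (Polynomial.natDegree_sub_le _ _); simp
      nlinarith
    have h2 : ((1 + X : ℚ[X]) ^ (n - x)).natDegree ≤ n - x := by
      apply le_trans (Polynomial.natDegree_pow_le)
      have : (1 + X : ℚ[X]).natDegree ≤ 1 := by
        apply le_trans (Polynomial.natDegree_add_le _ _); simp
      nlinarith
    have := Polynomial.natDegree_mul_le (p := (1 - X : ℚ[X]) ^ x) (q := (1 + X : ℚ[X]) ^ (n - x))
    omega
  apply Polynomial.eq_of_infinite_eval_eq
  apply Set.Infinite.mono (s := {(-1 : ℚ)}ᶜ)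
  swap
  · exact Set.Finite.infinite_compl (Set.finite_singleton _)
  intro t ht
  simp only [Set.mem_compl_iff, Set.mem_singleton_iff] at ht
  have h1 : (1 : ℚ) + t ≠ 0 := fun h => ht (by linarith)
  simp only [Set.mem_setOf_eq, Polynomial.eval_finset_sum, Polynomial.eval_mul,
    Polynomial.eval_pow, Polynomial.eval_add, Polynomial.eval_sub, Polynomial.eval_one,
    Polynomial.eval_X, Polynomial.eval_C, Polynomial.eval_ofNat]
  set u : ℚ := (1 - t) / (1 + t) with hu
  have key : ∀ i ∈ Finset.range (n + 1),
      ((Int.castRingHom ℚ) (Polynomial.coeff ((1 - X : ℤ[X]) ^ x * (1 + X) ^ (n - x)) i)) *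
        ((1 - t) ^ i * (1 + t) ^ (n - i)) = Q.coeff i * u ^ i * (1 + t) ^ n := by
    intro i hi
    rw [hcoeff i]
    have hin : i ≤ n := by simpa using Nat.lt_succ_iff.mp (Finset.mem_range.mp hi)
    have hpow : (1 + t) ^ n = (1 + t) ^ i * (1 + t) ^ (n - i) := by
      rw [← pow_add]; congr 1; omega
    rw [hpow, hu, div_pow]
    field_simp
  rw [Finset.sum_congr rfl key, ← Finset.sum_mul]
  have heval : ∑ i ∈ Finset.range (n + 1), Q.coeff i * u ^ i = Q.eval u :=
    (Polynomial.eval_eq_sum_range' hdeg u).symm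
  rw [heval, hQ]
  simp only [Polynomial.eval_mul, Polynomial.eval_pow, Polynomial.eval_add,
    Polynomial.eval_sub, Polynomial.eval_one, Polynomial.eval_X]
  have e1 : (1 : ℚ) - u = 2 * t / (1 + t) := by rw [hu]; field_simp; ring
  have e2 : (1 : ℚ) + u = 2 / (1 + t) := by rw [hu]; field_simp; ring
  rw [e1, e2, div_pow, div_pow]
  have hpowt : (1 + t) ^ x * (1 + t) ^ (n - x) = (1 + t) ^ n := by
    rw [← pow_add]; congr 1; omega
  have h2n : (2 : ℚ) ^ x * 2 ^ (n - x) = 2 ^ n := by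
    rw [← pow_add]; congr 1; omega
  field_simp
  rw [mul_pow, hpowt, ← h2n]
  ring
end
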